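/- Let A : ℝ → Matrix n n ℝ be a continuous real matrix-valued function and let Y : ℝ → Matrix n n ℝ satisfy Y'(s) = A(s) · Y(s) for all s and Y(0) = I. If ∫₀^t ‖A(τ)‖₂ dτ < log 2, then the series Ω = ∑_{k=1}^∞ (-1)^{k+1} (Y(t) - I)^k / k converges (since ‖Y(t) - I‖₂ < 1), and exp(Ω) = Y(t). -/

import Mathlib

/-!
Write `X = Y(t) - 1` and transport everything to the Banach algebra of operators on Euclidean
space, where the norm is the spectral norm. Since `Y' = A Y` and `Y(0) = 1`, the function
`s ↦ ‖Y(s) - 1‖` stays below the barrier `exp (∫₀ˢ ‖A‖) - 1`, which is `< 1` at `s = t`.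

For `‖X‖ < 1` the Mercator series `L(s) = log (1 + s X)` converges locally uniformly in `s`
together with its derivative `X (1 + s X)⁻¹`. All `L(s)` commute, so `exp (L s)` has derivative
`X (1 + s X)⁻¹ exp (L s)`; the affine curve `1 + s X` solves the same linear ODE with the same
initial value, and uniqueness gives `exp (L 1) = 1 + X`.
-/

attribute [local instance] Matrix.normedAddCommGroup Matrix.normedSpace

/-- The spectral norm of a real matrix: the operator norm of the associated linear map
between Euclidean spaces. -/
noncomputable def l2norm {n : Type*} [Fintype n] [DecidableEq n] (A : Matrix n n ℝ) : ℝ :=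
  ‖Matrix.toEuclideanCLM (𝕜 := ℝ) A‖

open NormedSpace Set Filter Topology

section Gronwall

variable {𝔸 : Type*} [NormedRing 𝔸] [NormedSpace ℝ 𝔸] {a u : ℝ → 𝔸}

theorem norm_sub_le_of_hasDerivAt_mul_of_pos (ha : Continuous a)
    (hu : ∀ s, HasDerivAt u (a s * u s) s) {t δ : ℝ} (ht : 0 ≤ t) (hδ : 0 < δ) :
    ‖u t - u 0‖ ≤ (‖u 0‖ + δ) * Real.exp ((∫ s in (0:ℝ)..t, ‖a s‖) + δ * t) - ‖u 0‖ := by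
  set w : ℝ → ℝ := fun s => (∫ τ in (0:ℝ)..s, ‖a τ‖) + δ * s
  have hw : ∀ s, HasDerivAt w (‖a s‖ + δ) s := fun s =>
    (ha.norm.integral_hasStrictDerivAt 0 s).hasDerivAt.add
      (by simpa using (hasDerivAt_id s).const_mul δ)
  have hB : ∀ s, HasDerivAt (fun s => (‖u 0‖ + δ) * Real.exp (w s) - ‖u 0‖)
      ((‖u 0‖ + δ) * (Real.exp (w s) * (‖a s‖ + δ))) s := fun s =>
    (((hw s).exp).const_mul _).sub_const _
  have hf : ∀ s, HasDerivAt (fun s => u s - u 0) (a s * u s) s := fun s => (hu s).sub_const _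
  refine image_norm_le_of_norm_deriv_right_lt_deriv_boundary
    (HasDerivAt.continuousOn fun s _ => hf s) (fun s _ => (hf s).hasDerivWithinAt)
    (by simp [w, hδ.le]) hB (fun s _ hs => ?_) ⟨ht, le_rfl⟩
  -- the margin `δ` makes the derivative bound at the barrier strict
  have hpos : 0 < δ * ((‖u 0‖ + δ) * Real.exp (w s)) := by positivity
  calc ‖a s * u s‖ ≤ ‖a s‖ * (‖u s - u 0‖ + ‖u 0‖) := by
        refine (norm_mul_le _ _).trans (mul_le_mul_of_nonneg_left ?_ (norm_nonneg _))
        simpa using norm_add_le (u s - u 0) (u 0)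
    _ = ‖a s‖ * ((‖u 0‖ + δ) * Real.exp (w s)) := by simp only [hs]; ring
    _ < _ := by nlinarith

theorem norm_sub_le_of_hasDerivAt_mul (ha : Continuous a)
    (hu : ∀ s, HasDerivAt u (a s * u s) s) {t : ℝ} (ht : 0 ≤ t) :
    ‖u t - u 0‖ ≤ ‖u 0‖ * (Real.exp (∫ s in (0:ℝ)..t, ‖a s‖) - 1) := by
  set I := ∫ s in (0:ℝ)..t, ‖a s‖
  have hcont : Continuous fun δ : ℝ => (‖u 0‖ + δ) * Real.exp (I + δ * t) - ‖u 0‖ := by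
    fun_prop
  have hlim := (hcont.tendsto 0).mono_left (nhdsWithin_le_nhds (s := Ioi 0))
  refine le_of_le_of_eq (ge_of_tendsto hlim ?_) (by simp; ring)
  filter_upwards [self_mem_nhdsWithin] with δ hδ
  exact norm_sub_le_of_hasDerivAt_mul_of_pos ha hu ht hδ

theorem norm_sub_one_lt_one_of_integral_lt_log_two (hone : ‖(1 : 𝔸)‖ ≤ 1) (ha : Continuous a)
    (hu : ∀ s, HasDerivAt u (a s * u s) s) (hu0 : u 0 = 1) {t : ℝ} (ht : 0 ≤ t)
    (hint : (∫ s in (0:ℝ)..t, ‖a s‖) < Real.log 2) : ‖u t - 1‖ < 1 := by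
  have hexp : Real.exp (∫ s in (0:ℝ)..t, ‖a s‖) < 2 :=
    (Real.lt_log_iff_exp_lt two_pos).mp hint
  have hI : 0 ≤ ∫ s in (0:ℝ)..t, ‖a s‖ :=
    intervalIntegral.integral_nonneg ht fun _ _ => norm_nonneg _
  have := norm_sub_le_of_hasDerivAt_mul ha hu ht
  rw [hu0] at this
  nlinarith [Real.add_one_le_exp (∫ s in (0:ℝ)..t, ‖a s‖), norm_nonneg (1 : 𝔸)]

end Gronwall

theorem tsum_neg_pow_mul_one_add {R : Type*} [NormedRing R] [HasSummableGeomSeries R] {x : R}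
    (hx : ‖x‖ < 1) : (∑' k : ℕ, (-x) ^ k) * (1 + x) = 1 := by
  simpa using geom_series_mul_neg (-x) (by rwa [norm_neg])

section Mercator

variable {𝔸 : Type*} [NormedRing 𝔸] [NormedAlgebra ℝ 𝔸]

noncomputable def mercatorSum (X : 𝔸) : 𝔸 :=
  ∑' k : ℕ, ((-1 : ℝ) ^ k / (k + 1)) • X ^ (k + 1)

theorem mercatorSum_zero : mercatorSum (0 : 𝔸) = 0 := by
  simp [mercatorSum]

theorem commute_mercatorSum_smul (X : 𝔸) (a b : ℝ) :
    Commute (mercatorSum (a • X)) (mercatorSum (b • X)) :=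
  Commute.tsum_left _ fun _ => Commute.tsum_right _ fun _ =>
    ((((Commute.refl X).smul_left a).smul_right b).pow_pow _ _).smul_left _ |>.smul_right _

theorem mul_pow_neg_smul (X : 𝔸) (s : ℝ) (k : ℕ) :
    X * (-(s • X)) ^ k = (-s) ^ k • X ^ (k + 1) := by
  rw [← neg_smul, smul_pow, mul_smul_comm, ← pow_succ']

theorem hasDerivAt_mercator_term (X : 𝔸) (k : ℕ) (s : ℝ) :
    HasDerivAt (fun s : ℝ => ((-1 : ℝ) ^ k / (k + 1)) • (s • X) ^ (k + 1))
      (X * (-(s • X)) ^ k) s := by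
  set c : ℝ := (-1) ^ k / (k + 1)
  have hfun : (fun s : ℝ => c • (s • X) ^ (k + 1)) = fun y => (c * y ^ (k + 1)) • X ^ (k + 1) := by
    funext y; rw [smul_pow, smul_smul]
  have hval : X * (-(s • X)) ^ k = (c * ((k + 1 : ℕ) * s ^ (k + 1 - 1))) • X ^ (k + 1) := by
    rw [mul_pow_neg_smul, Nat.add_sub_cancel, neg_pow]
    congr 1
    simp only [c]
    push_cast
    field_simp
  rw [hfun, hval]
  exact ((hasDerivAt_pow (k + 1) s).const_mul c).smul_const (X ^ (k + 1))

variable [CompleteSpace 𝔸]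

theorem hasSum_mercatorSum {X : 𝔸} (hX : ‖X‖ < 1) :
    HasSum (fun k : ℕ => ((-1 : ℝ) ^ k / (k + 1)) • X ^ (k + 1)) (mercatorSum X) := by
  refine (Summable.of_norm_bounded
    ((summable_geometric_of_lt_one (norm_nonneg X) hX).mul_left ‖X‖) fun k => ?_).hasSum
  have hc : ‖(-1 : ℝ) ^ k / (k + 1)‖ ≤ 1 := by
    rw [norm_div, norm_pow, norm_neg, norm_one, one_pow, Real.norm_eq_abs,
      abs_of_pos (by positivity)]
    exact div_le_one_of_le₀ (by simp) (by positivity)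
  calc ‖((-1 : ℝ) ^ k / (k + 1)) • X ^ (k + 1)‖ ≤ ‖X ^ (k + 1)‖ := by
        rw [norm_smul]; exact mul_le_of_le_one_left (norm_nonneg _) hc
    _ ≤ ‖X‖ * ‖X‖ ^ k := by rw [← pow_succ']; exact norm_pow_le' X k.succ_pos

theorem hasDerivAt_mercatorSum_smul {X : 𝔸} {s : ℝ} (hs : ‖s • X‖ < 1) :
    HasDerivAt (fun s : ℝ => mercatorSum (s • X)) (X * ∑' k : ℕ, (-(s • X)) ^ k) s := by
  obtain ⟨r, hsr, hr⟩ : ∃ r > |s|, r * ‖X‖ < 1 := by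
    rw [norm_smul, Real.norm_eq_abs] at hs
    exact ((continuous_id.mul continuous_const).tendsto |s|).eventually (gt_mem_nhds hs)
      |>.exists_gt
  have hr0 : 0 < r := (abs_nonneg s).trans_lt hsr
  have hbound : ∀ k (y : ℝ), y ∈ Ioo (-r) r → ‖X * (-(y • X)) ^ k‖ ≤ ‖X‖ * (r * ‖X‖) ^ k := by
    intro k y hy
    rw [mul_pow_neg_smul, norm_smul, norm_pow, norm_neg, Real.norm_eq_abs, mul_pow]
    calc |y| ^ k * ‖X ^ (k + 1)‖ ≤ r ^ k * ‖X‖ ^ (k + 1) :=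
          mul_le_mul (pow_le_pow_left₀ (abs_nonneg _) (abs_lt.2 hy).le k)
            (norm_pow_le' X k.succ_pos) (norm_nonneg _) (by positivity)
      _ = ‖X‖ * (r ^ k * ‖X‖ ^ k) := by ring
  have hderiv := hasDerivAt_tsum_of_isPreconnected
    (g := fun (k : ℕ) (s : ℝ) => ((-1 : ℝ) ^ k / (k + 1)) • (s • X) ^ (k + 1))
    (g' := fun (k : ℕ) (s : ℝ) => X * (-(s • X)) ^ k)
    ((summable_geometric_of_lt_one (by positivity) hr).mul_left ‖X‖) isOpen_Ioo
    isPreconnected_Ioo (fun k y _ => hasDerivAt_mercator_term X k y) hbound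
    (y₀ := 0) ⟨neg_lt_zero.2 hr0, hr0⟩ (by simp) (abs_lt.1 hsr)
  have hgeom : Summable fun k : ℕ => (-(s • X)) ^ k :=
    summable_geometric_of_norm_lt_one (by rwa [norm_neg])
  rw [← hgeom.tsum_mul_left]
  exact hderiv

theorem hasDerivAt_exp_of_commute {L : ℝ → 𝔸} {L' : 𝔸} {s : ℝ} (hL : HasDerivAt L L' s)
    (hcomm : ∀ h, Commute (L h) (L s)) :
    HasDerivAt (fun h => exp (L h)) (L' * exp (L s)) s := by
  have hshift : HasDerivAt (fun h => exp (L h - L s)) L' s := by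
    have hL0 : HasDerivAt (fun h => L h - L s) L' s := hL.sub_const _
    have := (sub_self (L s) ▸ hasFDerivAt_exp_zero (𝕂 := ℝ) (𝔸 := 𝔸)).comp_hasDerivAt s hL0
    simpa [Function.comp_def] using this
  let : NormedAlgebra ℚ 𝔸 := NormedAlgebra.restrictScalars ℚ ℝ 𝔸
  refine (hshift.mul_const (exp (L s))).congr_of_eventuallyEq (Eventually.of_forall fun h => ?_)
  change exp (L h) = exp (L h - L s) * exp (L s)
  rw [← exp_add_of_commute ((hcomm h).sub_left (Commute.refl _)), sub_add_cancel]

theorem exp_mercatorSum {X : 𝔸} (hX : ‖X‖ < 1) : exp (mercatorSum X) = 1 + X := by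
  set D : ℝ → 𝔸 := fun s => X * ∑' k : ℕ, (-(s • X)) ^ k
  set C : ℝ := ‖X‖ * (‖(1 : 𝔸)‖ - 1 + (1 - ‖X‖)⁻¹)
  have hsmall : ∀ s ∈ Icc (0 : ℝ) 1, ‖s • X‖ ≤ ‖X‖ := fun s hs => by
    rw [norm_smul, Real.norm_of_nonneg hs.1]; exact mul_le_of_le_one_left (norm_nonneg X) hs.2
  have hE : ∀ s ∈ Icc (0 : ℝ) 1, HasDerivAt (fun s : ℝ => exp (mercatorSum (s • X)))
      (D s * exp (mercatorSum (s • X))) s := fun s hs =>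
    hasDerivAt_exp_of_commute (hasDerivAt_mercatorSum_smul ((hsmall s hs).trans_lt hX))
      fun h => commute_mercatorSum_smul X h s
  have hF : ∀ s ∈ Icc (0 : ℝ) 1, HasDerivAt (fun s : ℝ => 1 + s • X) (D s * (1 + s • X)) s := by
    intro s hs
    rw [show D s * (1 + s • X) = X by
      rw [mul_assoc, tsum_neg_pow_mul_one_add ((hsmall s hs).trans_lt hX), mul_one]]
    simpa using ((hasDerivAt_id s).smul_const X).const_add (1 : 𝔸)
  have hDC : ∀ s ∈ Icc (0 : ℝ) 1, ‖D s‖ ≤ C := fun s hs => by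
    refine (norm_mul_le _ _).trans (mul_le_mul_of_nonneg_left ?_ (norm_nonneg X))
    refine (tsum_geometric_le_of_norm_lt_one _ (by simpa using (hsmall s hs).trans_lt hX)).trans ?_
    rw [norm_neg]
    gcongr
    exact hsmall s hs
  have hD : ∀ s ∈ Icc (0 : ℝ) 1, LipschitzWith (Real.toNNReal C) (fun y => D s * y) :=
    fun s hs => LipschitzWith.of_dist_le_mul fun y z => by
      rw [dist_eq_norm, dist_eq_norm, ← mul_sub]
      exact (norm_mul_le _ _).trans (mul_le_mul_of_nonneg_right
        ((hDC s hs).trans (Real.le_coe_toNNReal C)) (norm_nonneg _))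
  have huniq := ODE_solution_unique_of_mem_Icc_right (v := fun s y => D s * y) (s := fun _ => univ)
    (fun s hs => (hD s (Ico_subset_Icc_self hs)).lipschitzOnWith)
    (HasDerivAt.continuousOn hE) (fun s hs => (hE s (Ico_subset_Icc_self hs)).hasDerivWithinAt)
    (fun _ _ => trivial)
    (HasDerivAt.continuousOn hF) (fun s hs => (hF s (Ico_subset_Icc_self hs)).hasDerivWithinAt)
    (fun _ _ => trivial) (by simp [mercatorSum_zero]) ⟨zero_le_one, le_rfl⟩
  simpa using huniq

end Mercator

theorem ContinuousAlgEquiv.map_exp {𝕂 𝔸 𝔹 : Type*} [Field 𝕂] [CharZero 𝕂] [Ring 𝔸] [Ring 𝔹]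
    [Algebra 𝕂 𝔸] [Algebra 𝕂 𝔹] [TopologicalSpace 𝔸] [TopologicalSpace 𝔹]
    [IsTopologicalRing 𝔸] [IsTopologicalRing 𝔹] [T2Space 𝔸] [T2Space 𝔹]
    (φ : 𝔸 ≃A[𝕂] 𝔹) (x : 𝔸) : φ (exp x) = exp (φ x) := by
  rw [exp_eq_tsum 𝕂, exp_eq_tsum 𝕂]
  exact (φ : 𝔸 ≃L[𝕂] 𝔹).map_tsum.trans (by simp)

noncomputable def Matrix.toEuclideanContinuousAlgEquiv (n : Type*) [Fintype n] [DecidableEq n] :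
    Matrix n n ℝ ≃A[ℝ] (EuclideanSpace ℝ n →L[ℝ] EuclideanSpace ℝ n) :=
  let e := (Matrix.toEuclideanCLM (𝕜 := ℝ) (n := n)).toAlgEquiv
  { e with
    continuous_toFun := e.toLinearEquiv.toContinuousLinearEquiv.continuous
    continuous_invFun := e.toLinearEquiv.toContinuousLinearEquiv.symm.continuous }

@[simp]
theorem Matrix.toEuclideanContinuousAlgEquiv_apply {n : Type*} [Fintype n] [DecidableEq n]
    (A : Matrix n n ℝ) :
    Matrix.toEuclideanContinuousAlgEquiv n A = Matrix.toEuclideanCLM (𝕜 := ℝ) A :=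
  rfl

/-- If `Y` is the fundamental solution of `Y' = A(t) Y`, `Y(0) = I`, and
`∫₀^t ‖A(τ)‖₂ dτ < log 2`, then `‖Y(t) - I‖₂ < 1`, the Mercator series
`Ω = ∑_{k=1}^∞ (-1)^{k+1} (Y(t) - I)^k / k` converges, and `exp(Ω) = Y(t)`. -/
theorem magnus_stmt7 {n : Type*} [Fintype n] [DecidableEq n]
    (A : ℝ → Matrix n n ℝ) (hA : Continuous A)
    (Y : ℝ → Matrix n n ℝ)
    (hY : ∀ s : ℝ, HasDerivAt Y (A s * Y s) s) (hY0 : Y 0 = 1)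
    (t : ℝ) (ht : 0 < t)
    (hint : (∫ τ in (0:ℝ)..t, l2norm (A τ)) < Real.log 2) :
    l2norm (Y t - 1) < 1 ∧
    ∃ Ω : Matrix n n ℝ,
      HasSum (fun k : ℕ => ((-1 : ℝ) ^ k / (k + 1)) • (Y t - 1) ^ (k + 1)) Ω ∧
      NormedSpace.exp Ω = Y t := by
  set φ := Matrix.toEuclideanContinuousAlgEquiv n with hφ
  have hu (s : ℝ) : HasDerivAt (fun s => φ (Y s)) (φ (A s) * φ (Y s)) s :=
    (φ.toContinuousLinearEquiv.toContinuousLinearMap.hasFDerivAt.comp_hasDerivAt s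
      (hY s)).congr_deriv (map_mul φ _ _)
  have hX : ‖φ (Y t) - 1‖ < 1 :=
    norm_sub_one_lt_one_of_integral_lt_log_two
      (by rw [ContinuousLinearMap.one_def]; exact ContinuousLinearMap.norm_id_le)
      (φ.continuous.comp hA) hu (by simp [hY0]) ht.le (by simpa [hφ, l2norm] using hint)
  have hl2 : l2norm (Y t - 1) = ‖φ (Y t) - 1‖ := by simp [hφ, l2norm]
  refine ⟨hl2 ▸ hX, φ.symm (mercatorSum (φ (Y t) - 1)), ?_, ?_⟩
  · simpa [Function.comp_def] using (hasSum_mercatorSum hX).map φ.symm φ.symm.continuous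
  · rw [← φ.symm.map_exp, exp_mercatorSum hX, add_sub_cancel, φ.symm_apply_apply]
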